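/- Let n ≥ 1, let 1 ≤ p ≤ ∞ and 1 ≤ q < ∞, let α, β > -1 and let a, b, c be real numbers. If T_{a,b,c} is bounded from L^p_α to L^q_β (with L^∞ in place of L^p_α when p = ∞), then -qa < β+1. -/

import Mathlib

open MeasureTheory Complex
open scoped ENNReal

noncomputable section

/-- `ℂ^n` with the Euclidean (Hermitian) structure. -/
abbrev Cn (n : ℕ) := EuclideanSpace ℂ (Fin n)

instance (n : ℕ) : MeasurableSpace (Cn n) := MeasurableSpace.comap WithLp.ofLp MeasurableSpace.pi
instance (n : ℕ) : BorelSpace (Cn n) := PiLp.borelSpace 2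

/-- The open unit ball `B_n` of `ℂ^n`. -/
def unitBall (n : ℕ) : Set (Cn n) := Metric.ball 0 1

/-- Lebesgue volume measure on `B_n`, normalized so that `v(B_n) = 1`. -/
def vol (n : ℕ) : Measure (Cn n) :=
  (volume (unitBall n))⁻¹ • volume.restrict (unitBall n)

/-- The weighted measure `dv_γ = c_γ (1-|z|²)^γ dv`, with
`c_γ = Γ(n+γ+1)/(n! Γ(γ+1))`. -/
def wvol (n : ℕ) (γ : ℝ) : Measure (Cn n) :=
  (vol n).withDensity fun z =>
    ENNReal.ofReal
      ((Real.Gamma ((n : ℝ) + γ + 1) / ((n.factorial : ℝ) * Real.Gamma (γ + 1))) *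
        (1 - ‖z‖ ^ 2) ^ γ)

/-- The Hermitian pairing `⟨z,w⟩ = ∑ z_j conj(w_j)`. -/
def herm {n : ℕ} (z w : Cn n) : ℂ := ∑ j, z j * (starRingEnd ℂ) (w j)

/-- Kernel of the Forelli–Rudin type operator `T_{a,b,c}`:
`(1-|z|²)^a (1-|w|²)^b (1-⟨z,w⟩)^{-c}` (principal branch power). -/
def Tker (n : ℕ) (a b c : ℝ) (z w : Cn n) : ℂ :=
  (((1 - ‖z‖ ^ 2) ^ a * (1 - ‖w‖ ^ 2) ^ b : ℝ) : ℂ) * (1 - herm z w) ^ (-(c : ℂ))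

/-- Kernel of the Forelli–Rudin type operator `S_{a,b,c}`:
`(1-|z|²)^a (1-|w|²)^b |1-⟨z,w⟩|^{-c}`. -/
def Sker (n : ℕ) (a b c : ℝ) (z w : Cn n) : ℂ :=
  (((1 - ‖z‖ ^ 2) ^ a * (1 - ‖w‖ ^ 2) ^ b * ‖1 - herm z w‖ ^ (-c) : ℝ) : ℂ)

/-- The integral operator with kernel `K` (integration in `w` with respect to `ρ`)
is bounded from `L^p(μ)` to `L^q(ν)`: there is `C ≥ 0` such that for every
`f ∈ L^p(μ)` the defining integral converges absolutely for a.e. `z` and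
`‖A f‖_{L^q(ν)} ≤ C ‖f‖_{L^p(μ)}`. -/
def IsBddOp (n : ℕ) (K : Cn n → Cn n → ℂ) (ρ : Measure (Cn n))
    (p q : ℝ≥0∞) (μ ν : Measure (Cn n)) : Prop :=
  ∃ C : ℝ, 0 ≤ C ∧ ∀ f : Cn n → ℂ, MemLp f p μ →
    (∀ᵐ z ∂(vol n), Integrable (fun w => K z w * f w) ρ) ∧
    eLpNorm (fun z => ∫ w, K z w * f w ∂ρ) q ν ≤ ENNReal.ofReal C * eLpNorm f p μ

/-!
Test the operator on the indicator `f` of a small ball `B_δ` around `0`. For `δ` small,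
`(1-|w|²)^b · Re (1-⟨z,w⟩)^{-c} ≥ 1/2` for all `w ∈ B_δ` and `z ∈ B_n`, so
`|T f(z)| ≥ v(B_δ)/2 · (1-|z|²)^a`. Hence `‖T f‖_{q,β}^q` dominates a multiple of
`∫_{B_n} (1-|z|²)^{qa+β} dv`, which diverges when `qa+β ≤ -1` (in polar coordinates it is
`∫_0^1 r^{2n-1} (1-r²)^{qa+β} dr`), whereas `f` has finite `L^p` norm.
-/

open Metric Set Filter Topology

theorem exists_half_le_one_sub_sq_rpow_mul_re_cpow (b c : ℝ) :
    ∃ δ, 0 < δ ∧ δ < 1 ∧ ∀ t : ℝ, ∀ u : ℂ, |t| ≤ δ → ‖u‖ ≤ δ →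
      1 / 2 ≤ (1 - t ^ 2) ^ b * ((1 - u) ^ (-(c : ℂ))).re := by
  have hcont : ContinuousAt
      (fun p : ℝ × ℂ => (1 - p.1 ^ 2) ^ b * ((1 - p.2) ^ (-(c : ℂ))).re) (0, 0) := by
    refine ContinuousAt.mul ?_ (Complex.continuous_re.continuousAt.comp ?_)
    · exact (continuousAt_const.sub (continuousAt_fst.pow 2)).rpow_const (Or.inl (by simp))
    · exact (continuousAt_const.sub continuousAt_snd).cpow continuousAt_const (by simp)
  have hev : ∀ᶠ p in 𝓝 ((0 : ℝ), (0 : ℂ)),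
      1 / 2 < (1 - p.1 ^ 2) ^ b * ((1 - p.2) ^ (-(c : ℂ))).re :=
    hcont.eventually (lt_mem_nhds (by norm_num))
  obtain ⟨ε, hε, hball⟩ := Metric.nhds_basis_closedBall.eventually_iff.1 hev
  refine ⟨min ε (1 / 2), by positivity, by linarith [min_le_right ε (1 / 2)],
    fun t u ht hu => (hball (x := (t, u)) ?_).le⟩
  rw [mem_closedBall, Prod.dist_eq, max_le_iff, Real.dist_eq, Complex.dist_eq, sub_zero,
    sub_zero]
  exact ⟨ht.trans (min_le_left _ _), hu.trans (min_le_left _ _)⟩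

theorem norm_herm_le {n : ℕ} (z w : Cn n) : ‖herm z w‖ ≤ ‖z‖ * ‖w‖ := by
  have : herm z w = inner ℂ w z := by
    rw [herm, PiLp.inner_apply]
    congr 1
  rw [this, mul_comm]
  exact norm_inner_le_norm w z

theorem half_rpow_le_re_Tker {n : ℕ} {a b c δ : ℝ}
    (hδ : ∀ t : ℝ, ∀ u : ℂ, |t| ≤ δ → ‖u‖ ≤ δ →
      1 / 2 ≤ (1 - t ^ 2) ^ b * ((1 - u) ^ (-(c : ℂ))).re)
    {z w : Cn n} (hz : ‖z‖ ≤ 1) (hw : ‖w‖ ≤ δ) :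
    (1 - ‖z‖ ^ 2) ^ a / 2 ≤ (Tker n a b c z w).re := by
  have hu : ‖herm z w‖ ≤ δ :=
    (norm_herm_le z w).trans (by nlinarith [norm_nonneg z, norm_nonneg w])
  have hx : 0 ≤ (1 - ‖z‖ ^ 2) ^ a := Real.rpow_nonneg (by nlinarith [norm_nonneg z]) a
  rw [Tker, re_ofReal_mul, mul_assoc, div_eq_mul_one_div]
  exact mul_le_mul_of_nonneg_left (hδ ‖w‖ (herm z w) (by rwa [abs_norm]) hu) hx

theorem measureReal_div_two_mul_le_norm_integral_Tker_indicator {n : ℕ} {a b c δ : ℝ}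
    (hδ : ∀ t : ℝ, ∀ u : ℂ, |t| ≤ δ → ‖u‖ ≤ δ →
      1 / 2 ≤ (1 - t ^ 2) ^ b * ((1 - u) ^ (-(c : ℂ))).re)
    (μ : Measure (Cn n)) [IsFiniteMeasure μ] {z : Cn n} (hz : ‖z‖ ≤ 1)
    (hint : Integrable
      (fun w => Tker n a b c z w * (closedBall 0 δ).indicator (fun _ => (1 : ℂ)) w) μ) :
    μ.real (closedBall 0 δ) / 2 * (1 - ‖z‖ ^ 2) ^ a ≤
      ‖∫ w, Tker n a b c z w * (closedBall 0 δ).indicator (fun _ => (1 : ℂ)) w ∂μ‖ := by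
  set F : Cn n → ℂ := fun w => Tker n a b c z w * (closedBall 0 δ).indicator (fun _ => 1) w
  have hpt : ∀ w,
      (closedBall 0 δ).indicator (fun _ => (1 - ‖z‖ ^ 2) ^ a / 2) w ≤ (F w).re := by
    intro w
    by_cases hw : w ∈ closedBall 0 δ
    · simpa [F, indicator_of_mem hw] using
        half_rpow_le_re_Tker hδ hz (mem_closedBall_zero_iff.1 hw)
    · simp [F, indicator_of_notMem hw]
  calc μ.real (closedBall 0 δ) / 2 * (1 - ‖z‖ ^ 2) ^ a
      = ∫ w, (closedBall 0 δ).indicator (fun _ => (1 - ‖z‖ ^ 2) ^ a / 2) w ∂μ := by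
        rw [integral_indicator_const _ measurableSet_closedBall, smul_eq_mul]
        ring
    _ ≤ ∫ w, (F w).re ∂μ :=
        integral_mono ((integrable_const _).indicator measurableSet_closedBall) hint.re hpt
    _ = (∫ w, F w ∂μ).re := by simpa using integral_re hint
    _ ≤ _ := Complex.re_le_norm _

instance (n : ℕ) : IsFiniteMeasure (vol n) := by
  constructor
  rw [vol, Measure.smul_apply, Measure.restrict_apply_univ, smul_eq_mul]
  exact (ENNReal.inv_mul_le_one _).trans_lt ENNReal.one_lt_top

theorem ae_vol_mem_unitBall (n : ℕ) : ∀ᵐ z ∂vol n, z ∈ unitBall n :=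
  Measure.ae_smul_measure (ae_restrict_mem measurableSet_ball) _

theorem vol_closedBall_pos (n : ℕ) [Nontrivial (Cn n)] {δ : ℝ} (hδ0 : 0 < δ)
    (hδ1 : δ < 1) : 0 < vol n (closedBall 0 δ) := by
  rw [vol, Measure.smul_apply, Measure.restrict_apply measurableSet_closedBall, unitBall,
    inter_eq_left.2 (closedBall_subset_ball hδ1), smul_eq_mul]
  exact ENNReal.mul_pos (ENNReal.inv_ne_zero.2 measure_ball_lt_top.ne)
    (measure_closedBall_pos _ _ hδ0).ne'

theorem wvol_closedBall_lt_top (n : ℕ) (γ : ℝ) {δ : ℝ} (hδ : δ < 1) :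
    wvol n γ (closedBall 0 δ) < ⊤ := by
  rw [wvol, withDensity_apply _ measurableSet_closedBall]
  refine Integrable.lintegral_lt_top
    (ContinuousOn.integrableOn_compact (isCompact_closedBall 0 δ) (continuousOn_const.mul
      ((continuousOn_const.sub (continuous_norm.continuousOn.pow 2)).rpow_const
        fun z hz => Or.inl ?_)))
  have : ‖z‖ ≤ δ := mem_closedBall_zero_iff.1 hz
  simp only [Pi.sub_apply, Pi.pow_apply]
  nlinarith [norm_nonneg z]

theorem not_integrableOn_Ioo_pow_mul_one_sub_sq_rpow (k : ℕ) {s : ℝ} (hs : s ≤ -1) :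
    ¬ IntegrableOn (fun y : ℝ => y ^ k * (1 - y ^ 2) ^ s) (Ioo 0 1) := by
  intro h
  have hinv : IntegrableOn (fun y : ℝ => (y - 1)⁻¹) (Ioo (1 / 2) 1) := by
    refine Integrable.mono'
      ((h.mono_set (Ioo_subset_Ioo_left (by norm_num))).const_mul (2 ^ (k + 1))) (by fun_prop)
      ((ae_restrict_iff' measurableSet_Ioo).2 (.of_forall fun y ⟨hy0, hy1⟩ => ?_))
    have hsq : 0 < 1 - y ^ 2 := by nlinarith
    calc ‖(y - 1)⁻¹‖ = 2 * (2 * (1 - y))⁻¹ := by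
          rw [norm_inv, Real.norm_eq_abs, abs_of_neg (by linarith), neg_sub, mul_inv,
            ← mul_assoc, mul_inv_cancel₀ two_ne_zero, one_mul]
      _ ≤ 2 * (1 - y ^ 2) ^ (-1 : ℝ) := by
          rw [Real.rpow_neg_one]; gcongr; nlinarith
      _ ≤ 2 * (1 - y ^ 2) ^ s := by
          have := Real.rpow_le_rpow_of_exponent_ge hsq (by nlinarith) hs
          gcongr
      _ ≤ 2 * ((2 * y) ^ k * (1 - y ^ 2) ^ s) := by
          gcongr; exact le_mul_of_one_le_left (by positivity) (one_le_pow₀ (by linarith))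
      _ = 2 ^ (k + 1) * (y ^ k * (1 - y ^ 2) ^ s) := by ring
  have := (intervalIntegrable_iff_integrableOn_Ioo_of_le (by norm_num)).2 hinv
  rw [intervalIntegrable_sub_inv_iff] at this
  norm_num at this

theorem lintegral_ball_one_sub_norm_sq_rpow_eq_top {E : Type*} [NormedAddCommGroup E]
    [NormedSpace ℝ E] [FiniteDimensional ℝ E] [Nontrivial E] [MeasurableSpace E] [BorelSpace E]
    (μ : Measure E) [μ.IsAddHaarMeasure] {s : ℝ} (hs : s ≤ -1) :
    ∫⁻ x in ball 0 1, ENNReal.ofReal ((1 - ‖x‖ ^ 2) ^ s) ∂μ = ⊤ := by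
  by_contra h
  have hmeas : AEStronglyMeasurable (fun x : E => (1 - ‖x‖ ^ 2) ^ s) (μ.restrict (ball 0 1)) :=
    ((measurable_const.sub (measurable_norm.pow_const 2)).pow_const s).aestronglyMeasurable
  have hnonneg : 0 ≤ᵐ[μ.restrict (ball 0 1)] fun x : E => (1 - ‖x‖ ^ 2) ^ s :=
    (ae_restrict_iff' measurableSet_ball).2 (.of_forall fun x hx => Real.rpow_nonneg
      (by rw [mem_ball_zero_iff] at hx; nlinarith [norm_nonneg x]) s)
  exact not_integrableOn_Ioo_pow_mul_one_sub_sq_rpow _ hs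
    ((integrableOn_fun_norm_addHaar μ (f := fun y => (1 - y ^ 2) ^ s)).1
      ((lintegral_ofReal_ne_top_iff_integrable hmeas hnonneg).1 h))

theorem eLpNorm_one_sub_norm_sq_rpow_eq_top (n : ℕ) [Nontrivial (Cn n)] {q β a : ℝ}
    (hq : 0 < q) (hβ : -1 < β) (h : q * a + β ≤ -1) :
    eLpNorm (fun z : Cn n => (1 - ‖z‖ ^ 2) ^ a) (ENNReal.ofReal q) (wvol n β) = ⊤ := by
  have hlint : ∫⁻ z, ‖(1 - ‖z‖ ^ 2) ^ a‖ₑ ^ q ∂wvol n β = ⊤ := by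
    rw [wvol, lintegral_withDensity_eq_lintegral_mul _ (by fun_prop) (by fun_prop), vol,
      lintegral_smul_measure, unitBall]
    set cβ := Real.Gamma ((n : ℝ) + β + 1) / ((n.factorial : ℝ) * Real.Gamma (β + 1))
    have hcβ : 0 < cβ := div_pos (Real.Gamma_pos_of_pos (by linarith [n.cast_nonneg (α := ℝ)]))
      (mul_pos (by positivity) (Real.Gamma_pos_of_pos (by linarith)))
    have hdensity : ∀ z ∈ ball (0 : Cn n) 1,
        ENNReal.ofReal (cβ * (1 - ‖z‖ ^ 2) ^ β) * ‖(1 - ‖z‖ ^ 2) ^ a‖ₑ ^ q =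
          ENNReal.ofReal cβ * ENNReal.ofReal ((1 - ‖z‖ ^ 2) ^ (q * a + β)) := by
      intro z hz
      have hx : 0 < 1 - ‖z‖ ^ 2 := by
        rw [mem_ball_zero_iff] at hz
        nlinarith [norm_nonneg z]
      rw [Real.enorm_eq_ofReal (by positivity),
        ENNReal.ofReal_rpow_of_nonneg (by positivity) hq.le, ← Real.rpow_mul hx.le,
        ← ENNReal.ofReal_mul (by positivity), ← ENNReal.ofReal_mul hcβ.le,
        show q * a + β = β + a * q by ring, Real.rpow_add hx, mul_assoc]
    simp only [Pi.mul_apply]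
    rw [setLIntegral_congr_fun measurableSet_ball hdensity,
      lintegral_const_mul' _ _ ENNReal.ofReal_ne_top,
      lintegral_ball_one_sub_norm_sq_rpow_eq_top volume h,
      ENNReal.mul_top (ENNReal.ofReal_pos.2 hcβ).ne', smul_eq_mul,
      ENNReal.mul_top (ENNReal.inv_ne_zero.2 measure_ball_lt_top.ne)]
  rw [eLpNorm_eq_lintegral_rpow_enorm_toReal (by simpa using hq) ENNReal.ofReal_ne_top,
    ENNReal.toReal_ofReal hq.le, hlint, ENNReal.top_rpow_of_pos (by positivity)]

theorem stmt14_general (n : ℕ) (hn : 1 ≤ n) (p : ℝ≥0∞) (q α β a b c : ℝ)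
    (hq : 1 ≤ q) (hβ : -1 < β)
    (hT : IsBddOp n (Tker n a b c) (vol n) p (ENNReal.ofReal q)
      (if p = ⊤ then vol n else wvol n α) (wvol n β)) :
    -q * a < β + 1 := by
  by_contra! hqa
  have : Nonempty (Fin n) := ⟨⟨0, hn⟩⟩
  obtain ⟨δ, hδ0, hδ1, hδ⟩ := exists_half_le_one_sub_sq_rpow_mul_re_cpow b c
  set f : Cn n → ℂ := (closedBall 0 δ).indicator fun _ => 1
  have hf : MemLp f p (if p = ⊤ then vol n else wvol n α) := by
    refine memLp_indicator_const p measurableSet_closedBall 1 (Or.inr ?_)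
    split_ifs
    exacts [measure_ne_top _ _, (wvol_closedBall_lt_top n α hδ1).ne]
  obtain ⟨C, -, hC⟩ := hT
  obtain ⟨hint, hTf⟩ := hC f hf
  set m := (vol n).real (closedBall 0 δ) / 2
  have hm : 0 < m :=
    half_pos (ENNReal.toReal_pos (vol_closedBall_pos n hδ0 hδ1).ne' (measure_ne_top _ _))
  have hlow : ∀ᵐ z ∂wvol n β,
      ‖m * (1 - ‖z‖ ^ 2) ^ a‖ ≤ ‖∫ w, Tker n a b c z w * f w ∂vol n‖ := by
    filter_upwards [(withDensity_absolutelyContinuous _ _).ae_le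
      (hint.and (ae_vol_mem_unitBall n))] with z ⟨hz_int, hz⟩
    rw [unitBall, mem_ball_zero_iff] at hz
    have hx : 0 ≤ 1 - ‖z‖ ^ 2 := by nlinarith [norm_nonneg z]
    rw [Real.norm_of_nonneg (mul_nonneg hm.le (Real.rpow_nonneg hx a))]
    exact measureReal_div_two_mul_le_norm_integral_Tker_indicator hδ (vol n) hz.le hz_int
  have htop :
      eLpNorm (fun z : Cn n => m * (1 - ‖z‖ ^ 2) ^ a) (ENNReal.ofReal q) (wvol n β) = ⊤ := by
    rw [show (fun z : Cn n => m * (1 - ‖z‖ ^ 2) ^ a) = m • fun z => (1 - ‖z‖ ^ 2) ^ a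
        from rfl, eLpNorm_const_smul,
      eLpNorm_one_sub_norm_sq_rpow_eq_top n (by linarith) hβ (by linarith),
      ENNReal.mul_top (by simpa using hm.ne')]
  exact ENNReal.mul_ne_top ENNReal.ofReal_ne_top hf.eLpNorm_ne_top
    (top_le_iff.1 (htop ▸ (eLpNorm_mono_ae hlow).trans hTf))

/-- if `T_{a,b,c}` is bounded from `L^p_α` (`1 ≤ p ≤ ∞`) to `L^q_β`
(`1 ≤ q < ∞`), then `-qa < β+1`. -/
theorem stmt14 (n : ℕ) (hn : 1 ≤ n) (p : ℝ≥0∞) (q α β a b c : ℝ)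
    (hp : 1 ≤ p) (hq : 1 ≤ q) (hα : -1 < α) (hβ : -1 < β)
    (hT : IsBddOp n (Tker n a b c) (vol n) p (ENNReal.ofReal q)
      (if p = ⊤ then vol n else wvol n α) (wvol n β)) :
    -q * a < β + 1 :=
  stmt14_general n hn p q α β a b c hq hβ hT
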